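/- Let F : G → ℝ be a nonnegative function on a (finite-dimensional) Lie group G that is differentiable. Then for every ε > 0 there exists σ ∈ G with |DF(σ)(Y)| ≤ ε for all Y in the Lie algebra of G with ‖Y‖ = 1, provided F attains values arbitrarily close to its infimum along a sequence with bounded distance to the identity and F is C¹ with locally bounded second derivatives (Ekeland-type variational principle on G). -/

import Mathlib

/-- At a minimizer of `y ↦ F y + ε‖y‖`, directional derivatives of `F` are ≥ -ε. -/
lemma aux_dir_ge {E : Type*} [NormedAddCommGroup E] [NormedSpace ℝ E]
    (F : E → ℝ) (hdiff : Differentiable ℝ F) {ε : ℝ} (hε : 0 < ε)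
    {σ : E} (hmin : ∀ y, F σ + ε * ‖σ‖ ≤ F y + ε * ‖y‖)
    (Y : E) (hY : ‖Y‖ = 1) : -ε ≤ fderiv ℝ F σ Y := by
  have hd : HasDerivAt (fun t : ℝ => F (σ + t • Y)) (fderiv ℝ F σ Y) 0 := by
    have h1 : HasFDerivAt F (fderiv ℝ F σ) (σ + (0:ℝ) • Y) := by
      simpa using (hdiff (σ + (0:ℝ) • Y)).hasFDerivAt
    have h2 : HasDerivAt (fun t : ℝ => σ + t • Y) Y 0 := by
      simpa using ((hasDerivAt_id (0:ℝ)).smul_const Y).const_add σ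
    exact (h1.comp_hasDerivAt 0 h2)
  have htend : Filter.Tendsto (slope (fun t : ℝ => F (σ + t • Y)) 0)
      (nhdsWithin (0:ℝ) (Set.Ioi 0)) (nhds (fderiv ℝ F σ Y)) :=
    (hasDerivAt_iff_tendsto_slope.mp hd).mono_left
      (nhdsWithin_mono 0 (fun t ht => ne_of_gt ht))
  have hslope : ∀ᶠ t in nhdsWithin (0:ℝ) (Set.Ioi 0),
      -ε ≤ slope (fun t : ℝ => F (σ + t • Y)) 0 t := by
    filter_upwards [self_mem_nhdsWithin] with t ht
    have ht' : (0:ℝ) < t := ht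
    have key : F σ - ε * t ≤ F (σ + t • Y) := by
      have := hmin (σ + t • Y)
      have hnorm : ‖σ + t • Y‖ ≤ ‖σ‖ + t := by
        calc ‖σ + t • Y‖ ≤ ‖σ‖ + ‖t • Y‖ := norm_add_le _ _
        _ = ‖σ‖ + t := by rw [norm_smul, hY, Real.norm_eq_abs, abs_of_pos ht']; ring
      nlinarith
    rw [slope_def_field]
    rw [le_div_iff₀ (by linarith : (0:ℝ) < t - 0)]
    simp only [zero_smul, add_zero]
    nlinarith
  exact ge_of_tendsto htend hslope

/-- Ekeland-type variational principle (abstracting (5.7) in Appendix 2).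
The finite-dimensional Lie group `Aut_r(M)` is modeled by its Lie algebra `E`,
a finite-dimensional real vector space; `F` is the nonnegative differentiable
functional `σ ↦ F(ω_φ, σ*ω_{KS})`. -/
theorem stmt_12 {E : Type*} [NormedAddCommGroup E] [NormedSpace ℝ E]
    [FiniteDimensional ℝ E]
    (F : E → ℝ) (hdiff : Differentiable ℝ F) (hnonneg : ∀ x, 0 ≤ F x) :
    ∀ ε : ℝ, 0 < ε → ∃ σ : E, ∀ Y : E, ‖Y‖ = 1 → |fderiv ℝ F σ Y| ≤ ε := by
  intro ε hε
  set G : E → ℝ := fun y => F y + ε * ‖y‖ with hG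
  have hGc : Continuous G := by
    exact hdiff.continuous.add (continuous_const.mul continuous_norm)
  have hcoer : Filter.Tendsto G (Filter.cocompact E) Filter.atTop := by
    have h1 : Filter.Tendsto (fun y : E => ε * ‖y‖) (Filter.cocompact E) Filter.atTop :=
      (tendsto_norm_cocompact_atTop).const_mul_atTop hε
    exact Filter.tendsto_atTop_mono (fun y => by
      have := hnonneg y; simp only [hG]; linarith) h1
  obtain ⟨σ, hσ⟩ := hGc.exists_forall_le hcoer
  refine ⟨σ, fun Y hY => ?_⟩
  have h1 : -ε ≤ fderiv ℝ F σ Y := aux_dir_ge F hdiff hε hσ Y hY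
  have h2 : -ε ≤ fderiv ℝ F σ (-Y) := aux_dir_ge F hdiff hε hσ (-Y) (by simpa using hY)
  rw [map_neg] at h2
  rw [abs_le]
  constructor <;> linarith
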